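/- Let d ≥ 1, τ > 0, let B, M : ℝ → ℂ^{d×d} be continuous and τ-periodic, let λ ∈ ℂ with λ ≠ 0, and let U : ℝ → ℂ^{d×d} be a principal matrix solution of the matrix function t ↦ λ⁻¹B(t) − M(t). Then there exists a differentiable, τ-periodic, not identically zero function φ : ℝ → ℂ^d satisfying B(t)φ(t) = λ(φ'(t) + M(t)φ(t)) for all t ∈ ℝ if and only if det(I − U(τ)) = 0. -/

import Mathlib

attribute [local instance] Matrix.normedAddCommGroup Matrix.normedSpace

/-! Rewriting the eigenvalue equation as `φ' = (λ⁻¹B − M)φ`, uniqueness for linear ODEs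
with continuous coefficients shows that every solution is `t ↦ U t *ᵥ φ 0`. As the
coefficient is `τ`-periodic, `t ↦ U (t + τ) *ᵥ v` is again a solution, so `t ↦ U t *ᵥ v`
is `τ`-periodic iff `U τ *ᵥ v = v`. Nonzero periodic solutions thus correspond to nonzero
fixed vectors of `U τ`, which exist iff `det (1 - U τ) = 0`. -/

open Set Function

theorem ODE_linear_solution_unique {E : Type*} [NormedAddCommGroup E] [NormedSpace ℝ E]
    {N : ℝ → E →L[ℝ] E} (hN : Continuous N) {f g : ℝ → E}
    (hf : ∀ t, HasDerivAt f (N t (f t)) t) (hg : ∀ t, HasDerivAt g (N t (g t)) t)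
    {t₀ : ℝ} (heq : f t₀ = g t₀) : f = g := by
  ext t
  obtain ⟨a, b, ht, ht₀⟩ : ∃ a b, t ∈ Ioo a b ∧ t₀ ∈ Ioo a b :=
    ⟨min t t₀ - 1, max t t₀ + 1, by grind⟩
  obtain ⟨C, hC⟩ :=
    (isCompact_Icc (a := a) (b := b)).exists_bound_of_continuousOn hN.continuousOn
  have hLip : ∀ s ∈ Ioo a b, LipschitzOnWith C.toNNReal (N s) univ := fun s hs =>
    have hNs : ‖N s‖₊ ≤ C.toNNReal := by
      simpa using Real.toNNReal_mono (hC s (Ioo_subset_Icc_self hs))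
    ((N s).lipschitz.weaken hNs).lipschitzOnWith
  exact ODE_solution_unique_of_mem_Ioo hLip ht₀ (fun s _ => ⟨hf s, trivial⟩)
    (fun s _ => ⟨hg s, trivial⟩) heq ht

namespace Matrix

theorem mulVec_eq_smul_add_mulVec_iff {n K : Type*} [Fintype n] [Field K]
    {B M : Matrix n n K} {c : K} (hc : c ≠ 0) (x y : n → K) :
    B *ᵥ x = c • (y + M *ᵥ x) ↔ y = (c⁻¹ • B - M) *ᵥ x := by
  rw [sub_mulVec, smul_mulVec, eq_sub_iff_add_eq, eq_inv_smul_iff₀ hc, eq_comm]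

variable {𝕜 : Type*} [RCLike 𝕜] {m n : Type*} [Fintype m] [Fintype n]

theorem _root_.HasDerivAt.matrix_mulVec_const {U : ℝ → Matrix m n 𝕜} {U' : Matrix m n 𝕜}
    {t : ℝ} (hU : HasDerivAt U U' t) (v : n → 𝕜) :
    HasDerivAt (fun s => U s *ᵥ v) (U' *ᵥ v) t := by
  have := ((mulVecBilin ℝ ℝ).flip v).toContinuousLinearMap.hasFDerivAt.comp_hasDerivAt t hU
  exact this

theorem ODE_mulVec_solution_unique {A : ℝ → Matrix n n 𝕜} (hA : Continuous A)
    {f g : ℝ → n → 𝕜} (hf : ∀ t, HasDerivAt f (A t *ᵥ f t) t)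
    (hg : ∀ t, HasDerivAt g (A t *ᵥ g t) t) {t₀ : ℝ} (heq : f t₀ = g t₀) : f = g :=
  ODE_linear_solution_unique (N := fun t => (mulVecBilin ℝ ℝ (A t)).toContinuousLinearMap)
    (continuous_clm_apply.mpr fun _ => hA.matrix_mulVec continuous_const) hf hg heq

variable {A U : ℝ → Matrix n n 𝕜}

theorem hasDerivAt_mulVec_of_principal (hU : ∀ t, HasDerivAt U (A t * U t) t) (v : n → 𝕜)
    (t : ℝ) : HasDerivAt (fun s => U s *ᵥ v) (A t *ᵥ (U t *ᵥ v)) t := by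
  simpa only [mulVec_mulVec] using (hU t).matrix_mulVec_const v

variable [DecidableEq n]

theorem eq_principal_mulVec (hA : Continuous A) (hU0 : U 0 = 1)
    (hU : ∀ t, HasDerivAt U (A t * U t) t) {φ : ℝ → n → 𝕜}
    (hφ : ∀ t, HasDerivAt φ (A t *ᵥ φ t) t) : φ = fun t => U t *ᵥ φ 0 :=
  ODE_mulVec_solution_unique hA hφ (hasDerivAt_mulVec_of_principal hU (φ 0)) (t₀ := 0)
    (by rw [hU0, one_mulVec])

theorem periodic_principal_mulVec_iff (hA : Continuous A) {τ : ℝ} (hAper : Periodic A τ)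
    (hU0 : U 0 = 1) (hU : ∀ t, HasDerivAt U (A t * U t) t) (v : n → 𝕜) :
    Periodic (fun t => U t *ᵥ v) τ ↔ U τ *ᵥ v = v := by
  refine ⟨fun h => by simpa [hU0] using h 0, fun hv => congrFun ?_⟩
  have hshift :
      ∀ t, HasDerivAt (fun s => U (s + τ) *ᵥ v) (A t *ᵥ (U (t + τ) *ᵥ v)) t := by
    intro t
    simpa only [hAper t] using
      (hasDerivAt_mulVec_of_principal hU v (t + τ)).comp_add_const t τ
  exact ODE_mulVec_solution_unique hA hshift (hasDerivAt_mulVec_of_principal hU v) (t₀ := 0)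
    (by simp [hU0, hv])

theorem exists_periodic_solution_iff_det_one_sub_eq_zero (hA : Continuous A) {τ : ℝ}
    (hAper : Periodic A τ) (hU0 : U 0 = 1) (hU : ∀ t, HasDerivAt U (A t * U t) t) :
    (∃ φ : ℝ → n → 𝕜,
        (∀ t, HasDerivAt φ (A t *ᵥ φ t) t) ∧ Periodic φ τ ∧ ∃ t, φ t ≠ 0) ↔
      det (1 - U τ) = 0 := by
  simp_rw [← exists_mulVec_eq_zero_iff, sub_mulVec, one_mulVec, sub_eq_zero]
  constructor
  · rintro ⟨φ, hφ, hper, t, ht⟩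
    have hφU := eq_principal_mulVec hA hU0 hU hφ
    refine ⟨φ 0, fun h0 => ht ?_, ?_⟩
    · rw [hφU, h0]
      exact mulVec_zero _
    · rw [hφU] at hper
      exact ((periodic_principal_mulVec_iff hA hAper hU0 hU _).mp hper).symm
  · rintro ⟨v, hv, hfix⟩
    refine ⟨fun t => U t *ᵥ v, hasDerivAt_mulVec_of_principal hU v,
      (periodic_principal_mulVec_iff hA hAper hU0 hU v).mpr hfix.symm, 0, ?_⟩
    simpa only [hU0, one_mulVec] using hv

end Matrix

open Matrix

theorem stmt_3_general (d : ℕ) (τ : ℝ)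
    (B M : ℝ → Matrix (Fin d) (Fin d) ℂ)
    (hB : Continuous B) (hM : Continuous M)
    (hBper : ∀ t : ℝ, B (t + τ) = B t) (hMper : ∀ t : ℝ, M (t + τ) = M t)
    (lam : ℂ) (hlam : lam ≠ 0)
    (U : ℝ → Matrix (Fin d) (Fin d) ℂ)
    (hU0 : U 0 = 1)
    (hU : ∀ t : ℝ, HasDerivAt U ((lam⁻¹ • B t - M t) * U t) t) :
    (∃ (φ φd : ℝ → Fin d → ℂ),
      (∀ t : ℝ, HasDerivAt φ (φd t) t) ∧
      (∀ t : ℝ, φ (t + τ) = φ t) ∧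
      (∃ t : ℝ, φ t ≠ 0) ∧
      (∀ t : ℝ, (B t).mulVec (φ t) = lam • (φd t + (M t).mulVec (φ t)))) ↔
    Matrix.det (1 - U τ) = 0 := by
  set A := fun t => lam⁻¹ • B t - M t
  have hA : Continuous A := (hB.const_smul lam⁻¹).sub hM
  have hAper : Periodic A τ := fun t => by simp only [A, hBper t, hMper t]
  rw [← exists_periodic_solution_iff_det_one_sub_eq_zero hA hAper hU0 hU]
  simp_rw [mulVec_eq_smul_add_mulVec_iff hlam]
  constructor
  · rintro ⟨φ, φd, hφ, hper, hne, hφd⟩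
    obtain rfl := funext hφd
    exact ⟨φ, hφ, hper, hne⟩
  · rintro ⟨φ, hφ, hper, hne⟩
    exact ⟨φ, _, hφ, hper, hne, fun _ => rfl⟩

/-- For `B, M` continuous `τ`-periodic complex matrix functions,
`λ ≠ 0`, and `U` the principal matrix solution of `t ↦ λ⁻¹ B(t) − M(t)`, the
generalized eigenvalue problem `B φ = λ(φ' + M φ)` has a differentiable,
`τ`-periodic, not identically zero solution iff `det(I − U(τ)) = 0`. -/
theorem stmt_3 (d : ℕ) (hd : 1 ≤ d) (τ : ℝ) (hτ : 0 < τ)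
    (B M : ℝ → Matrix (Fin d) (Fin d) ℂ)
    (hB : Continuous B) (hM : Continuous M)
    (hBper : ∀ t : ℝ, B (t + τ) = B t) (hMper : ∀ t : ℝ, M (t + τ) = M t)
    (lam : ℂ) (hlam : lam ≠ 0)
    (U : ℝ → Matrix (Fin d) (Fin d) ℂ)
    (hU0 : U 0 = 1)
    (hU : ∀ t : ℝ, HasDerivAt U ((lam⁻¹ • B t - M t) * U t) t) :
    (∃ (φ φd : ℝ → Fin d → ℂ),
      (∀ t : ℝ, HasDerivAt φ (φd t) t) ∧
      (∀ t : ℝ, φ (t + τ) = φ t) ∧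
      (∃ t : ℝ, φ t ≠ 0) ∧
      (∀ t : ℝ, (B t).mulVec (φ t) = lam • (φd t + (M t).mulVec (φ t)))) ↔
    Matrix.det (1 - U τ) = 0 :=
  stmt_3_general d τ B M hB hM hBper hMper lam hlam U hU0 hU
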